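/- Let n ≥ 1, a : Fin n → ℝ and b ∈ ℝ with 0 < a i < b for all i, and let λ ∈ ℝ satisfy λ < a i for all i and λ > -∞ with a i - λ > 0 and b - λ > 0 (e.g. 0 ≤ λ < a i suffices). Define the linear map f_λ on ℝ^{n+1} by multiplying the coordinate x_i by Real.sqrt ((a i - λ)/(a i)) for i ≥ 1 and the coordinate x₀ by Real.sqrt ((b - λ)/b). If x ∈ ℝ^{n+1} satisfies B(x,x) = -(x 0)^2 + ∑_{i=1}^n (x i)^2 = -1, x 0 > 0, and q(x) = ∑_{i=1}^n (x i)^2/a i - (x 0)^2/b = 0, then f_λ x satisfies B(f_λ x, f_λ x) = -1, (f_λ x) 0 > 0, and q_λ(f_λ x) = ∑_{i=1}^n ((f_λ x) i)^2/(a i - λ) - ((f_λ x) 0)^2/(b - λ) = 0. (The map f_λ takes the hyperbolic ellipsoid E ⊂ ℍⁿ to the confocal hyperbolic ellipsoid E_λ.) -/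

import Mathlib

/-!
Write `q_λ(x) = ∑ x_i²/(a_i - λ) - x₀²/(b - λ)`, so that `q = q₀`. The map `f_λ` multiplies the
squared coordinates by `1 - λ/a_i` and `1 - λ/b`, hence `B(f_λ x, f_λ x) = B(x, x) - λ q(x)` and
`q_λ(f_λ x) = q(x)`: on the cone `q = 0` the map preserves `B(x, x) = -1`, and it carries `q = 0`
to `q_λ = 0`. Positivity of `x₀` survives because `f_λ` scales it by a positive factor.
-/

/-- The Minkowski bilinear form on `ℝ^{n+1}`: `B(x,y) = -x₀y₀ + ∑_{i=1}^n x_i y_i`. -/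
def minkowskiForm (n : ℕ) (x y : Fin (n + 1) → ℝ) : ℝ :=
  -(x 0 * y 0) + ∑ i : Fin n, x i.succ * y i.succ

noncomputable def confocalQuadric (n : ℕ) (a : Fin n → ℝ) (b lam : ℝ) (x : Fin (n + 1) → ℝ) : ℝ :=
  ∑ i : Fin n, (x i.succ) ^ 2 / (a i - lam) - (x 0) ^ 2 / (b - lam)

section ConfocalScaling

variable {n : ℕ} {a : Fin n → ℝ} {b lam : ℝ} {x y : Fin (n + 1) → ℝ}

theorem minkowskiForm_self (x : Fin (n + 1) → ℝ) :
    minkowskiForm n x x = -(x 0) ^ 2 + ∑ i : Fin n, (x i.succ) ^ 2 := by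
  simp [minkowskiForm, sq]

theorem minkowskiForm_self_of_confocal_scaling (ha : ∀ i, a i ≠ 0) (hb : b ≠ 0)
    (hy0 : y 0 ^ 2 = (b - lam) / b * x 0 ^ 2)
    (hy : ∀ i, y i.succ ^ 2 = (a i - lam) / a i * x i.succ ^ 2) :
    minkowskiForm n y y = minkowskiForm n x x - lam * confocalQuadric n a b 0 x := by
  have hyi : ∀ i, y i.succ ^ 2 = x i.succ ^ 2 - lam * (x i.succ ^ 2 / a i) := fun i => by
    rw [hy i]
    field_simp [ha i]
  simp only [minkowskiForm_self, confocalQuadric, sub_zero, hy0, hyi, Finset.sum_sub_distrib,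
    ← Finset.mul_sum]
  field_simp
  ring

theorem confocalQuadric_of_confocal_scaling (hal : ∀ i, a i - lam ≠ 0) (hbl : b - lam ≠ 0)
    (hy0 : y 0 ^ 2 = (b - lam) / b * x 0 ^ 2)
    (hy : ∀ i, y i.succ ^ 2 = (a i - lam) / a i * x i.succ ^ 2) :
    confocalQuadric n a b lam y = confocalQuadric n a b 0 x := by
  have cancel : ∀ {c d t : ℝ}, c ≠ 0 → c / d * t / c = t / d := by
    intro c d t hc
    rw [div_mul_eq_mul_div, div_div, mul_comm c, mul_div_mul_right _ _ hc]
  simp only [confocalQuadric, sub_zero, hy0, hy, cancel hbl, cancel (hal _)]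

end ConfocalScaling

theorem hyperbolic_confocal_map_general (n : ℕ) (hn : 1 ≤ n) (a : Fin n → ℝ) (b : ℝ)
    (ha : ∀ i, 0 < a i) (hab : ∀ i, a i < b)
    (lam : ℝ) (hlam : ∀ i, lam < a i)
    (f : (Fin (n + 1) → ℝ) →ₗ[ℝ] (Fin (n + 1) → ℝ))
    (hf0 : ∀ x : Fin (n + 1) → ℝ, f x 0 = Real.sqrt ((b - lam) / b) * x 0)
    (hfi : ∀ (x : Fin (n + 1) → ℝ) (i : Fin n),
      f x i.succ = Real.sqrt ((a i - lam) / a i) * x i.succ)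
    (x : Fin (n + 1) → ℝ)
    (hB : minkowskiForm n x x = -1) (hx0 : 0 < x 0)
    (hq : ∑ i : Fin n, (x i.succ) ^ 2 / a i - (x 0) ^ 2 / b = 0) :
    minkowskiForm n (f x) (f x) = -1 ∧ 0 < f x 0 ∧
      ∑ i : Fin n, (f x i.succ) ^ 2 / (a i - lam) - (f x 0) ^ 2 / (b - lam) = 0 := by
  have hb : 0 < b := (ha ⟨0, hn⟩).trans (hab ⟨0, hn⟩)
  have hbl : 0 < b - lam := sub_pos.2 ((hlam ⟨0, hn⟩).trans (hab ⟨0, hn⟩))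
  have hal : ∀ i, 0 < a i - lam := fun i => sub_pos.2 (hlam i)
  have hy0 : f x 0 ^ 2 = (b - lam) / b * x 0 ^ 2 := by
    rw [hf0, mul_pow, Real.sq_sqrt (div_pos hbl hb).le]
  have hy : ∀ i, f x i.succ ^ 2 = (a i - lam) / a i * x i.succ ^ 2 := fun i => by
    rw [hfi, mul_pow, Real.sq_sqrt (div_pos (hal i) (ha i)).le]
  have hq0 : confocalQuadric n a b 0 x = 0 := by simpa [confocalQuadric] using hq
  refine ⟨?_, ?_, ?_⟩
  · rw [minkowskiForm_self_of_confocal_scaling (fun i => (ha i).ne') hb.ne' hy0 hy, hB, hq0]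
    ring
  · rw [hf0]
    exact mul_pos (Real.sqrt_pos.2 (div_pos hbl hb)) hx0
  · exact (confocalQuadric_of_confocal_scaling (fun i => (hal i).ne') hbl.ne' hy0 hy).trans hq0

/-- The diagonal linear map `f_λ` (entries `√((a i - λ)/a i)` on `x_i`, `i ≥ 1`, and
`√((b - λ)/b)` on `x₀`) maps the hyperbolic ellipsoid `E ⊂ ℍⁿ` to the confocal hyperbolic
ellipsoid `E_λ`. -/
theorem hyperbolic_confocal_map (n : ℕ) (hn : 1 ≤ n) (a : Fin n → ℝ) (b : ℝ)
    (ha : ∀ i, 0 < a i) (hab : ∀ i, a i < b)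
    (lam : ℝ) (hlam : ∀ i, lam < a i) (hlamb : lam < b)
    (f : (Fin (n + 1) → ℝ) →ₗ[ℝ] (Fin (n + 1) → ℝ))
    (hf0 : ∀ x : Fin (n + 1) → ℝ, f x 0 = Real.sqrt ((b - lam) / b) * x 0)
    (hfi : ∀ (x : Fin (n + 1) → ℝ) (i : Fin n),
      f x i.succ = Real.sqrt ((a i - lam) / a i) * x i.succ)
    (x : Fin (n + 1) → ℝ)
    (hB : minkowskiForm n x x = -1) (hx0 : 0 < x 0)
    (hq : ∑ i : Fin n, (x i.succ) ^ 2 / a i - (x 0) ^ 2 / b = 0) :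
    minkowskiForm n (f x) (f x) = -1 ∧ 0 < f x 0 ∧
      ∑ i : Fin n, (f x i.succ) ^ 2 / (a i - lam) - (f x 0) ^ 2 / (b - lam) = 0 :=
  hyperbolic_confocal_map_general n hn a b ha hab lam hlam f hf0 hfi x hB hx0 hq
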